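/- arXiv:1906.07271 — 7 statements merged into one kernel-verified Lean document; each statement's English description precedes it below -/
import Mathlib

section
/- Let K be a field, X a finite nonempty alphabet, and S : X* → K a series admitting an unambiguous linear representation. Then S is Hadamard sub-invertible, i.e. the series S' : X* → K defined by S'(w) = S(w)⁻¹ for w with S(w) ≠ 0 and S'(w) = 0 otherwise is rational. -/
open scoped Classical

/-- Product of the matrices `μ x` along the word `w`. -/
def wordProd {X K : Type*} [Semiring K] {n : ℕ} (μ : X → Matrix (Fin n) (Fin n) K)
    (w : List X) : Matrix (Fin n) (Fin n) K :=
  (w.map μ).prod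

/-- `(u, μ, v)` is a linear representation of the series `S : X* → K`. -/
def IsLinRep {X K : Type*} [Semiring K] {n : ℕ} (S : List X → K)
    (u : Fin n → K) (μ : X → Matrix (Fin n) (Fin n) K) (v : Fin n → K) : Prop :=
  ∀ w : List X, S w = dotProduct u (Matrix.mulVec (wordProd μ w) v)

/-- A series is rational if it admits a linear representation. -/
def IsRational {X K : Type*} [Semiring K] (S : List X → K) : Prop :=
  ∃ (n : ℕ) (u : Fin n → K) (μ : X → Matrix (Fin n) (Fin n) K) (v : Fin n → K),
    IsLinRep S u μ v

/-- `p` is an accepting path for the word `w` in the weighted automaton associated to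
`(u, μ, v)`. -/
def IsAcceptingPath {X K : Type*} [Semiring K] {n : ℕ}
    (u : Fin n → K) (μ : X → Matrix (Fin n) (Fin n) K) (v : Fin n → K)
    (w : List X) (p : Fin (w.length + 1) → Fin n) : Prop :=
  u (p 0) ≠ 0 ∧
  (∀ i : Fin w.length, μ (w.get i) (p i.castSucc) (p i.succ) ≠ 0) ∧
  v (p (Fin.last w.length)) ≠ 0

/-- The linear representation `(u, μ, v)` is unambiguous: every word labels at most one
accepting path. -/
def IsUnambiguous {X K : Type*} [Semiring K] {n : ℕ}
    (u : Fin n → K) (μ : X → Matrix (Fin n) (Fin n) K) (v : Fin n → K) : Prop :=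
  ∀ (w : List X) (p q : Fin (w.length + 1) → Fin n),
    IsAcceptingPath u μ v w p → IsAcceptingPath u μ v w q → p = q

/-- `S` is a Pólya series: its nonzero coefficients lie in a finitely generated subgroup
of `Kˣ`. -/
def IsPolya {X K : Type*} [Field K] (S : List X → K) : Prop :=
  ∃ G : Subgroup Kˣ, G.FG ∧ ∀ w : List X, S w = 0 ∨ ∃ g ∈ G, (g : K) = S w

/-- The linear representation is deterministic: at most one initial state, and every row
of each `μ x` has at most one nonzero entry. -/
def IsDeterministic {X K : Type*} [Semiring K] {n : ℕ}
    (u : Fin n → K) (μ : X → Matrix (Fin n) (Fin n) K) : Prop :=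
  (∀ i j : Fin n, u i ≠ 0 → u j ≠ 0 → i = j) ∧
  ∀ (x : X) (p q q' : Fin n), μ x p q ≠ 0 → μ x p q' ≠ 0 → q = q'

/-- Minimal linear representation: no linear representation of `S` has smaller rank. -/
def IsMinimalRep {X K : Type*} [Semiring K] {n : ℕ} (S : List X → K)
    (u : Fin n → K) (μ : X → Matrix (Fin n) (Fin n) K) (v : Fin n → K) : Prop :=
  IsLinRep S u μ v ∧
  ∀ (m : ℕ) (u' : Fin m → K) (μ' : X → Matrix (Fin m) (Fin m) K) (v' : Fin m → K),
    IsLinRep S u' μ' v' → n ≤ m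

/-- The set `Ω = {u · μ(w) : w ∈ X*}` is contained in a finite union of subspaces of
dimension at most 1, i.e. the linear hull has dimension at most 1. -/
def HullDimLE1 {X K : Type*} [Field K] {n : ℕ}
    (u : Fin n → K) (μ : X → Matrix (Fin n) (Fin n) K) : Prop :=
  ∃ (k : ℕ) (W : Fin k → Submodule K (Fin n → K)),
    (∀ i, Module.finrank K (W i) ≤ 1) ∧
    ∀ w : List X, ∃ i, Matrix.vecMul u (wordProd μ w) ∈ W i

/-!
Expanding `u μ(w) v` over the paths of the weighted automaton writes `S w` as a sum of
path weights, and in an unambiguous representation at most one of them is nonzero. A sum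
with at most one nonzero term can be inverted termwise, and the termwise inverse of a path
weight is the path weight for the entrywise inverted representation `(u⁻¹, μ⁻¹, v⁻¹)`, which
therefore represents `w ↦ (S w)⁻¹`.
-/

open Matrix

theorem inv_sum_eq_sum_inv_of_subsingleton_support {ι K : Type*} [Fintype ι] [DivisionRing K]
    (f : ι → K) (hf : ∀ i j, f i ≠ 0 → f j ≠ 0 → i = j) :
    (∑ i, f i)⁻¹ = ∑ i, (f i)⁻¹ := by
  by_cases h : ∃ i, f i ≠ 0
  · obtain ⟨i, hi⟩ := h
    have hzero : ∀ j ∈ Finset.univ, j ≠ i → f j = 0 := fun j _ hji =>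
      by_contra fun hj => hji (hf j i hj hi)
    rw [Finset.sum_eq_single_of_mem i (Finset.mem_univ i) hzero,
      Finset.sum_eq_single_of_mem i (Finset.mem_univ i) fun j hj hji => by simp [hzero j hj hji]]
  · simp_all

section PathWeight

variable {X K : Type*} {n : ℕ}

def pathWeight [CommSemiring K] (u : Fin n → K) (μ : X → Matrix (Fin n) (Fin n) K)
    (v : Fin n → K) (w : List X) (p : Fin (w.length + 1) → Fin n) : K :=
  u (p 0) * (∏ i : Fin w.length, μ (w.get i) (p i.castSucc) (p i.succ)) *
    v (p (Fin.last w.length))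

theorem pathWeight_cons [CommSemiring K] (u : Fin n → K) (μ : X → Matrix (Fin n) (Fin n) K)
    (v : Fin n → K) (x : X) (w : List X) (a : Fin n) (q : Fin (w.length + 1) → Fin n) :
    pathWeight u μ v (x :: w) (Fin.cons a q) = pathWeight (fun b => u a * μ x a b) μ v w q := by
  simp only [pathWeight, List.length_cons, Fin.prod_univ_succ, ← Fin.succ_last, Fin.cons_succ,
    Fin.castSucc_zero, Fin.cons_zero, ← Fin.succ_castSucc, List.get_eq_getElem, Fin.val_succ,
    List.getElem_cons_succ, Fin.val_zero, List.getElem_cons_zero]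
  ring

theorem dotProduct_mulVec_wordProd [CommSemiring K] (μ : X → Matrix (Fin n) (Fin n) K)
    (w : List X) (u v : Fin n → K) :
    u ⬝ᵥ (wordProd μ w *ᵥ v) = ∑ p, pathWeight u μ v w p := by
  induction w generalizing u with
  | nil =>
    refine Eq.trans ?_ (Fintype.sum_equiv (Equiv.funUnique (Fin 1) (Fin n)) _
      (fun a => u a * v a) fun p => by simp [pathWeight]).symm
    simp [wordProd, dotProduct]
  | cons x w ih =>
    rw [← (Fin.consEquiv fun _ => Fin n).sum_comp, Fintype.sum_prod_type, Finset.sum_comm,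
      wordProd, List.map_cons, List.prod_cons, ← mulVec_mulVec, dotProduct_mulVec, ← wordProd, ih]
    refine Finset.sum_congr rfl fun q _ => ?_
    simp only [pathWeight, vecMul, dotProduct, Finset.sum_mul]
    exact Finset.sum_congr rfl fun a _ => (pathWeight_cons u μ v x w a q).symm

theorem isAcceptingPath_of_pathWeight_ne_zero [CommSemiring K] {u : Fin n → K}
    {μ : X → Matrix (Fin n) (Fin n) K} {v : Fin n → K} {w : List X}
    {p : Fin (w.length + 1) → Fin n} (h : pathWeight u μ v w p ≠ 0) :
    IsAcceptingPath u μ v w p := by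
  refine ⟨fun h0 => h ?_, fun i h0 => h ?_, fun h0 => h ?_⟩
  · simp [pathWeight, h0]
  · rw [pathWeight, Finset.prod_eq_zero (Finset.mem_univ i) h0, mul_zero, zero_mul]
  · simp [pathWeight, h0]

theorem pathWeight_inv [Field K] (u : Fin n → K) (μ : X → Matrix (Fin n) (Fin n) K)
    (v : Fin n → K) (w : List X) (p : Fin (w.length + 1) → Fin n) :
    pathWeight u⁻¹ (fun x => (μ x).map (·⁻¹)) v⁻¹ w p = (pathWeight u μ v w p)⁻¹ := by
  simp only [pathWeight, mul_inv, Finset.prod_inv_distrib, map_apply, Pi.inv_apply]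

end PathWeight

theorem IsLinRep.inv_of_isUnambiguous {X K : Type*} [Field K] {n : ℕ} {S : List X → K}
    {u : Fin n → K} {μ : X → Matrix (Fin n) (Fin n) K} {v : Fin n → K}
    (hS : IsLinRep S u μ v) (hu : IsUnambiguous u μ v) :
    IsLinRep (fun w => (S w)⁻¹) u⁻¹ (fun x => (μ x).map (·⁻¹)) v⁻¹ := by
  intro w
  simp only [hS w, dotProduct_mulVec_wordProd, pathWeight_inv]
  exact inv_sum_eq_sum_inv_of_subsingleton_support _ fun p q hp hq =>
    hu w p q (isAcceptingPath_of_pathWeight_ne_zero hp) (isAcceptingPath_of_pathWeight_ne_zero hq)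

theorem unambiguous_hadamardSubInvertible_general {K X : Type*} [Field K]
    (S : List X → K)
    (hrep : ∃ (n : ℕ) (u : Fin n → K) (μ : X → Matrix (Fin n) (Fin n) K) (v : Fin n → K),
      IsLinRep S u μ v ∧ IsUnambiguous u μ v) :
    IsRational (fun w => if S w ≠ 0 then (S w)⁻¹ else 0) := by
  obtain ⟨n, u, μ, v, hS, hu⟩ := hrep
  have hinv : (fun w => if S w ≠ 0 then (S w)⁻¹ else 0) = fun w => (S w)⁻¹ := by
    funext w
    by_cases h : S w = 0 <;> simp [h]
  exact hinv ▸ ⟨n, _, _, _, hS.inv_of_isUnambiguous hu⟩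

/-- Every series admitting an unambiguous linear representation is Hadamard
sub-invertible. -/
theorem unambiguous_hadamardSubInvertible {K X : Type*} [Field K] [Fintype X] [Nonempty X]
    (S : List X → K)
    (hrep : ∃ (n : ℕ) (u : Fin n → K) (μ : X → Matrix (Fin n) (Fin n) K) (v : Fin n → K),
      IsLinRep S u μ v ∧ IsUnambiguous u μ v) :
    IsRational (fun w => if S w ≠ 0 then (S w)⁻¹ else 0) :=
  unambiguous_hadamardSubInvertible_general S hrep
end

section
/- Let R be a domain with fraction field K and X a finite nonempty alphabet. Let S : X* → R be a series admitting an unambiguous linear representation with all entries of u, v, and all μ(x) in R. Then there exist k ≥ 0, elements λ₁, …, λ_k ∈ R \ {0}, linearly bounded rational ℤ-series a₁, …, a_k : X* → ℤ, and a regular language L ⊆ X* such that supp(aᵢ) ⊆ L for all i, S(w) = λ₁^{a₁(w)} ⋯ λ_k^{a_k(w)} (an identity in K, with integer exponents) for all w ∈ L, and S(w) = 0 for all w ∉ L. -/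
/-- A language is regular if it is accepted by a (finite) deterministic automaton. -/
def RegularLang {X : Type*} (L : Language X) : Prop :=
  ∃ (σ : Type) (_ : Fintype σ) (M : DFA X σ), M.accepts = L

/-- An integer-valued series is linearly bounded if `|a(w)| ≤ C·|w|` for all nonempty
words `w`. -/
def LinearlyBounded {X : Type*} (a : List X → ℤ) : Prop :=
  ∃ C : ℕ, ∀ w : List X, w ≠ [] → |a w| ≤ (C : ℤ) * w.length

/-!
A path of a word through the automaton of `(u, μ, v)` is determined by its events: the initial
state, the transitions `(letter, source, target)` and the final state; its weight is the product
of the weights of its events. By unambiguity `S w` is the weight of the unique accepting path of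
`w` if there is one and `0` otherwise, hence `S w = ∏ₑ (weight e) ^ aₑ(w)`, where `aₑ(w)` counts
the occurrences of the event `e` on that path.

The count `aₑ` is rational: give every event of nonzero weight the weight `1`, except `e`, which
gets `1 + ε` in the dual numbers `ℤ[ε]`; the `ε`-part of the resulting series is `aₑ`, and the
block matrices `[[a, b], [0, a]]` turn a representation over `ℤ[ε]` into one over `ℤ`. The
language of words with an accepting path is the support of the same construction over `ℕ`, which
the subset automaton recognises because sums in `ℕ` do not cancel.
-/

open Matrix

section PathSum
variable {X σ K : Type*} [Fintype σ] [CommSemiring K]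

theorem Fintype.sum_fun_fin_succ {M : Type*} [AddCommMonoid M] {l : ℕ}
    (F : (Fin (l + 1) → σ) → M) : ∑ p, F p = ∑ i, ∑ q : Fin l → σ, F (Fin.cons i q) := by
  rw [← (Fin.consEquiv fun _ => σ).sum_comp, Fintype.sum_prod_type]
  rfl

variable [DecidableEq σ]

theorem dotProduct_listProd_mulVec_eq_sum_paths (μ : X → Matrix σ σ K) (v : σ → K) :
    ∀ (w : List X) (u : σ → K), u ⬝ᵥ ((w.map μ).prod *ᵥ v) =
      ∑ p : Fin (w.length + 1) → σ,
        u (p 0) * (∏ j : Fin w.length, μ (w.get j) (p j.castSucc) (p j.succ)) *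
          v (p (Fin.last _))
  | [], u => by
    simp only [List.map_nil, List.prod_nil, one_mulVec, List.length_nil, Finset.univ_eq_empty,
      Finset.prod_empty, mul_one]
    exact Fintype.sum_equiv (Equiv.funUnique (Fin 1) σ).symm _ _ fun _ => rfl
  | x :: w, u => by
    rw [List.map_cons, List.prod_cons, ← mulVec_mulVec, dotProduct_mulVec,
      dotProduct_listProd_mulVec_eq_sum_paths μ v w]
    refine Eq.trans ?_ (Fintype.sum_fun_fin_succ (l := w.length + 1) _).symm
    rw [Finset.sum_comm]
    refine Finset.sum_congr rfl fun q _ => ?_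
    simp only [vecMul, dotProduct, Finset.sum_mul]
    refine Finset.sum_congr rfl fun i _ => ?_
    erw [Fin.prod_univ_succ (n := w.length)]
    simp [← Fin.succ_last, mul_assoc]

end PathSum

-- initial state ⊕ transition (letter, source, target) ⊕ final state
abbrev Event (X σ : Type*) := σ ⊕ (X × σ × σ) ⊕ σ

section Events
variable {X σ K : Type*}

def pathEvents (w : List X) (p : Fin (w.length + 1) → σ) : Multiset (Event X σ) :=
  .inl (p 0) ::ₘ .inr (.inr (p (Fin.last w.length))) ::ₘ
    ↑(List.ofFn fun j : Fin w.length =>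
      (.inr (.inl (w.get j, p j.castSucc, p j.succ)) : Event X σ))

theorem card_pathEvents (w : List X) (p : Fin (w.length + 1) → σ) :
    Multiset.card (pathEvents w p) = w.length + 2 := by
  simp [pathEvents]

def eventWeight (u : σ → K) (μ : X → Matrix σ σ K) (v : σ → K) : Event X σ → K :=
  Sum.elim u (Sum.elim (fun τ => μ τ.1 τ.2.1 τ.2.2) v)

variable [Fintype σ] [DecidableEq σ] [CommSemiring K]

def eventSeries (f : Event X σ → K) (w : List X) : K :=
  (fun i => f (.inl i)) ⬝ᵥ
    ((w.map fun x => Matrix.of fun i j => f (.inr (.inl (x, i, j)))).prod *ᵥ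
      fun j => f (.inr (.inr j)))

theorem eventSeries_eq_sum (f : Event X σ → K) (w : List X) :
    eventSeries f w = ∑ p, ((pathEvents w p).map f).prod := by
  rw [eventSeries, dotProduct_listProd_mulVec_eq_sum_paths]
  refine Finset.sum_congr rfl fun p _ => ?_
  simp [pathEvents, List.prod_ofFn, mul_comm, mul_left_comm]

theorem eventSeries_eventWeight (u : σ → K) (μ : X → Matrix σ σ K) (v : σ → K) (w : List X) :
    eventSeries (eventWeight u μ v) w = u ⬝ᵥ ((w.map μ).prod *ᵥ v) :=
  rfl

end Events

theorem Multiset.prod_map_boole {α M : Type*} [CommMonoidWithZero M] (s : Multiset α)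
    (P : α → Prop) [DecidablePred P] :
    (s.map fun a => if P a then (1 : M) else 0).prod = if ∀ a ∈ s, P a then 1 else 0 := by
  induction s using Multiset.induction_on with
  | empty => simp
  | cons a s ih => by_cases h : P a <;> simp [ih, h]

theorem Multiset.prod_map_eq_prod_pow_count {α M : Type*} [Fintype α] [DecidableEq α]
    [CommMonoid M] (s : Multiset α) (f : α → M) : (s.map f).prod = ∏ a, f a ^ s.count a := by
  rw [Finset.prod_multiset_map_count]
  refine Finset.prod_subset (Finset.subset_univ _) fun a _ ha => ?_
  rw [Multiset.count_eq_zero_of_notMem (by simpa using ha), pow_zero]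

theorem isRational_of_linRep {X σ K : Type*} [Fintype σ] [DecidableEq σ] [CommSemiring K]
    {S : List X → K} (u : σ → K) (μ : X → Matrix σ σ K) (v : σ → K)
    (h : ∀ w, S w = u ⬝ᵥ ((w.map μ).prod *ᵥ v)) : IsRational S := by
  let e := Fintype.equivFin σ
  refine ⟨_, u ∘ e.symm, fun x => reindexAlgEquiv K K e (μ x), v ∘ e.symm, fun w => ?_⟩
  have hprod : (w.map fun x => reindexAlgEquiv K K e (μ x)).prod =
      reindexAlgEquiv K K e (w.map μ).prod := by
    rw [map_list_prod, List.map_map]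
    rfl
  rw [h, wordProd, hprod, coe_reindexAlgEquiv, reindex_apply, submatrix_mulVec_equiv,
    dotProduct_comp_equiv_symm]
  simp [Function.comp_def]

section DualNumber
open TrivSqZeroExt
variable {σ R : Type*} [Fintype σ] [DecidableEq σ] [CommSemiring R]

def Matrix.dualBlock : Matrix σ σ (DualNumber R) →* Matrix (σ ⊕ σ) (σ ⊕ σ) R where
  toFun M := fromBlocks (M.map fst) (M.map snd) 0 (M.map fst)
  map_one' := by
    rw [← fromBlocks_one]
    congr <;> ext i j <;> by_cases h : i = j <;> simp [one_apply, h]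
  map_mul' M N := by
    rw [fromBlocks_multiply]
    congr 1 <;> ext i j <;> simp [mul_apply, fst_sum, snd_sum, Finset.sum_add_distrib, add_comm]

theorem snd_dotProduct_mulVec_eq_dualBlock (u : σ → DualNumber R) (M : Matrix σ σ (DualNumber R))
    (v : σ → DualNumber R) :
    (u ⬝ᵥ (M *ᵥ v)).snd =
      Sum.elim (fst ∘ u) (snd ∘ u) ⬝ᵥ (M.dualBlock *ᵥ Sum.elim (snd ∘ v) (fst ∘ v)) := by
  simp only [dualBlock, MonoidHom.coe_mk, OneHom.coe_mk, fromBlocks_mulVec,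
    sumElim_dotProduct_sumElim]
  simp [dotProduct, mulVec, snd_sum, Finset.mul_sum, Finset.sum_add_distrib, mul_add]

theorem IsRational.dualNumber_snd {X : Type*} {s : List X → DualNumber R} (hs : IsRational s) :
    IsRational fun w => (s w).snd := by
  obtain ⟨n, u, μ, v, h⟩ := hs
  refine isRational_of_linRep (Sum.elim (fst ∘ u) (snd ∘ u)) (fun x => (μ x).dualBlock)
    (Sum.elim (snd ∘ v) (fst ∘ v)) fun w => ?_
  rw [h w, wordProd, snd_dotProduct_mulVec_eq_dualBlock, map_list_prod, List.map_map]
  rfl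

end DualNumber

section NatSupport
variable {X : Type*} {σ : Type} [Fintype σ]

def supportDFA (u : σ → ℕ) (μ : X → Matrix σ σ ℕ) (v : σ → ℕ) : DFA X (Set σ) where
  step T x := {t | ∃ s ∈ T, μ x s t ≠ 0}
  start := Function.support u
  accept := {T | ∃ t ∈ T, v t ≠ 0}

theorem support_vecMul_nat (r : σ → ℕ) (M : Matrix σ σ ℕ) :
    Function.support (r ᵥ* M) = {t | ∃ s ∈ Function.support r, M s t ≠ 0} := by
  ext t
  simp [vecMul, dotProduct, Finset.sum_eq_zero_iff]

variable [DecidableEq σ]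

theorem supportDFA_evalFrom (u : σ → ℕ) (μ : X → Matrix σ σ ℕ) (v : σ → ℕ) :
    ∀ (w : List X) (r : σ → ℕ),
      (supportDFA u μ v).evalFrom (Function.support r) w = Function.support (r ᵥ* (w.map μ).prod)
  | [], r => by simp
  | x :: w, r => by
    rw [DFA.evalFrom_cons, List.map_cons, List.prod_cons, ← vecMul_vecMul,
      ← supportDFA_evalFrom u μ v w]
    congr 1
    exact (support_vecMul_nat r (μ x)).symm

theorem regularLang_support_nat (u : σ → ℕ) (μ : X → Matrix σ σ ℕ) (v : σ → ℕ) :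
    RegularLang {w : List X | u ⬝ᵥ ((w.map μ).prod *ᵥ v) ≠ 0} := by
  refine ⟨Set σ, inferInstance, supportDFA u μ v, ?_⟩
  ext w
  rw [DFA.mem_accepts, DFA.eval, show (supportDFA u μ v).start = Function.support u from rfl,
    supportDFA_evalFrom]
  show (∃ t ∈ _, v t ≠ 0) ↔ u ⬝ᵥ ((w.map μ).prod *ᵥ v) ≠ 0
  rw [dotProduct_mulVec]
  simp [dotProduct, Finset.sum_eq_zero_iff]

end NatSupport

section Unambiguous
open scoped Classical DualNumber
variable {X R : Type*} [CommSemiring R] {n : ℕ}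
  (u : Fin n → R) (μ : X → Matrix (Fin n) (Fin n) R) (v : Fin n → R)

theorem isAcceptingPath_iff (w : List X) (p : Fin (w.length + 1) → Fin n) :
    IsAcceptingPath u μ v w p ↔ ∀ e ∈ pathEvents w p, eventWeight u μ v e ≠ 0 := by
  simp [IsAcceptingPath, pathEvents, eventWeight, List.mem_ofFn, and_comm]

theorem prod_map_pathEvents_boole {M : Type*} [CommMonoidWithZero M] (w : List X)
    (p : Fin (w.length + 1) → Fin n) :
    ((pathEvents w p).map fun e => if eventWeight u μ v e ≠ 0 then (1 : M) else 0).prod =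
      if IsAcceptingPath u μ v w p then 1 else 0 := by
  simp only [Multiset.prod_map_boole, isAcceptingPath_iff]

def acceptedLang : Language X := {w | ∃ p, IsAcceptingPath u μ v w p}

noncomputable def acceptedCount (e : Event X (Fin n)) (w : List X) : ℤ :=
  ∑ p, if IsAcceptingPath u μ v w p then ((pathEvents w p).count e : ℤ) else 0

theorem acceptedLang_regular : RegularLang (acceptedLang u μ v) := by
  have h : acceptedLang u μ v =
      {w | eventSeries (fun e => if eventWeight u μ v e ≠ 0 then (1 : ℕ) else 0) w ≠ 0} := by
    ext w
    show (∃ p, _) ↔ _ ≠ 0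
    simp only [eventSeries_eq_sum, prod_map_pathEvents_boole]
    simp
  rw [h]
  exact regularLang_support_nat _ _ _

theorem acceptedCount_eq_snd (e : Event X (Fin n)) (w : List X) :
    acceptedCount u μ v e w = (eventSeries (fun e' : Event X (Fin n) =>
      (if eventWeight u μ v e' ≠ 0 then 1 else 0) * (if e' = e then 1 + ε else 1))
        w : DualNumber ℤ).snd := by
  rw [eventSeries_eq_sum, TrivSqZeroExt.snd_sum, acceptedCount]
  refine Finset.sum_congr rfl fun p _ => ?_
  rw [Multiset.prod_map_mul, prod_map_pathEvents_boole,
    Multiset.prod_map_eq_pow_single e fun e' he' _ => if_neg he', if_pos rfl]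
  split_ifs <;> simp

theorem isRational_acceptedCount (e : Event X (Fin n)) : IsRational (acceptedCount u μ v e) := by
  simp_rw [funext (acceptedCount_eq_snd u μ v e)]
  exact IsRational.dualNumber_snd ⟨n, _, _, _, fun w => rfl⟩

variable {u μ v}

theorem sum_ite_isAcceptingPath {M : Type*} [AddCommMonoid M] (hua : IsUnambiguous u μ v)
    {w : List X} {p : Fin (w.length + 1) → Fin n} (hp : IsAcceptingPath u μ v w p)
    (g : (Fin (w.length + 1) → Fin n) → M) :
    ∑ q, (if IsAcceptingPath u μ v w q then g q else 0) = g p := by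
  rw [Fintype.sum_eq_single p fun q hq => if_neg fun hq' => hq (hua w q p hq' hp), if_pos hp]

theorem acceptedCount_of_isAcceptingPath (hua : IsUnambiguous u μ v) {w : List X}
    {p : Fin (w.length + 1) → Fin n} (hp : IsAcceptingPath u μ v w p) (e : Event X (Fin n)) :
    acceptedCount u μ v e w = (pathEvents w p).count e :=
  sum_ite_isAcceptingPath hua hp _

theorem acceptedCount_of_not_mem {w : List X} (hw : w ∉ acceptedLang u μ v)
    (e : Event X (Fin n)) : acceptedCount u μ v e w = 0 :=
  Finset.sum_eq_zero fun p _ => if_neg fun hp => hw ⟨p, hp⟩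

theorem mem_acceptedLang_of_acceptedCount_ne_zero {e : Event X (Fin n)} {w : List X}
    (h : acceptedCount u μ v e w ≠ 0) : w ∈ acceptedLang u μ v :=
  not_not.mp fun hw => h (acceptedCount_of_not_mem hw e)

theorem linearlyBounded_acceptedCount (hua : IsUnambiguous u μ v) (e : Event X (Fin n)) :
    LinearlyBounded (acceptedCount u μ v e) := by
  refine ⟨3, fun w hw => ?_⟩
  have hlen : 1 ≤ w.length := List.length_pos_iff.mpr hw
  by_cases hL : w ∈ acceptedLang u μ v
  · obtain ⟨p, hp⟩ := hL
    have := (pathEvents w p).count_le_card e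
    rw [card_pathEvents] at this
    rw [acceptedCount_of_isAcceptingPath hua hp, abs_of_nonneg (by positivity)]
    push_cast
    omega
  · rw [acceptedCount_of_not_mem hL, abs_zero]
    positivity

theorem IsLinRep.eq_sum_accepting {S : List X → R} (hS : IsLinRep S u μ v) (w : List X) :
    S w = ∑ p, if IsAcceptingPath u μ v w p then
      ((pathEvents w p).map (eventWeight u μ v)).prod else 0 := by
  rw [hS w, wordProd, ← eventSeries_eventWeight, eventSeries_eq_sum]
  refine Finset.sum_congr rfl fun p _ => ?_
  split_ifs with hp
  · rfl
  · rw [isAcceptingPath_iff] at hp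
    simp only [not_forall, not_not, exists_prop] at hp
    obtain ⟨e, he, h0⟩ := hp
    exact Multiset.prod_eq_zero (Multiset.mem_map.mpr ⟨e, he, h0⟩)

theorem IsLinRep.eq_zero_of_not_mem {S : List X → R} (hS : IsLinRep S u μ v) {w : List X}
    (hw : w ∉ acceptedLang u μ v) : S w = 0 := by
  rw [hS.eq_sum_accepting]
  exact Finset.sum_eq_zero fun p _ => if_neg fun hp => hw ⟨p, hp⟩

theorem IsLinRep.algebraMap_eq_prod [Fintype X] {K : Type*} [Semifield K] [Algebra R K]
    {S : List X → R} (hS : IsLinRep S u μ v) (hua : IsUnambiguous u μ v) {w : List X}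
    (hw : w ∈ acceptedLang u μ v) :
    algebraMap R K (S w) = ∏ e : {e // eventWeight u μ v e ≠ 0},
      algebraMap R K (eventWeight u μ v e) ^ acceptedCount u μ v e w := by
  obtain ⟨p, hp⟩ := hw
  have hzero : ∀ e : {e // ¬eventWeight u μ v e ≠ 0}, (pathEvents w p).count e.1 = 0 :=
    fun e => Multiset.count_eq_zero.mpr fun he =>
      e.2 ((isAcceptingPath_iff u μ v w p).mp hp _ he)
  rw [hS.eq_sum_accepting, sum_ite_isAcceptingPath hua hp, map_multiset_prod, Multiset.map_map,
    Multiset.prod_map_eq_prod_pow_count,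
    ← Fintype.prod_subtype_mul_prod_subtype fun e => eventWeight u μ v e ≠ 0]
  simp [hzero, acceptedCount_of_isAcceptingPath hua hp]

end Unambiguous

theorem unambiguous_formula_general {R K X : Type*} [CommRing R] [Field K]
    [Algebra R K] [Fintype X]
    (S : List X → R)
    (hrep : ∃ (n : ℕ) (u : Fin n → R) (μ : X → Matrix (Fin n) (Fin n) R) (v : Fin n → R),
      IsLinRep S u μ v ∧ IsUnambiguous u μ v) :
    ∃ (k : ℕ) (lam : Fin k → R) (a : Fin k → (List X → ℤ)) (L : Language X),
      (∀ i, lam i ≠ 0) ∧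
      (∀ i, IsRational (a i)) ∧
      (∀ i, LinearlyBounded (a i)) ∧
      RegularLang L ∧
      (∀ (i : Fin k) (w : List X), a i w ≠ 0 → w ∈ L) ∧
      (∀ w ∈ L, algebraMap R K (S w) = ∏ i, (algebraMap R K (lam i)) ^ (a i w)) ∧
      (∀ w : List X, w ∉ L → S w = 0) := by
  classical
  obtain ⟨n, u, μ, v, hS, hua⟩ := hrep
  let e := (Fintype.equivFin {e : Event X (Fin n) // eventWeight u μ v e ≠ 0}).symm
  refine ⟨_, fun i => eventWeight u μ v (e i), fun i => acceptedCount u μ v (e i),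
    acceptedLang u μ v, fun i => (e i).2, fun i => isRational_acceptedCount u μ v _,
    fun i => linearlyBounded_acceptedCount hua _, acceptedLang_regular u μ v,
    fun _ _ => mem_acceptedLang_of_acceptedCount_ne_zero, fun w hw => ?_,
    fun _ => hS.eq_zero_of_not_mem⟩
  rw [hS.algebraMap_eq_prod hua hw, ← e.prod_comp]

/-- A series over a domain `R` with an unambiguous linear representation over `R` has its
coefficients of the form `λ₁^{a₁(w)} ⋯ λ_k^{a_k(w)}` on a regular language `L` (and `0`
off `L`), for linearly bounded rational integer series `aᵢ` supported on `L`. -/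
theorem unambiguous_formula {R K X : Type*} [CommRing R] [IsDomain R] [Field K]
    [Algebra R K] [IsFractionRing R K] [Fintype X] [Nonempty X]
    (S : List X → R)
    (hrep : ∃ (n : ℕ) (u : Fin n → R) (μ : X → Matrix (Fin n) (Fin n) R) (v : Fin n → R),
      IsLinRep S u μ v ∧ IsUnambiguous u μ v) :
    ∃ (k : ℕ) (lam : Fin k → R) (a : Fin k → (List X → ℤ)) (L : Language X),
      (∀ i, lam i ≠ 0) ∧
      (∀ i, IsRational (a i)) ∧
      (∀ i, LinearlyBounded (a i)) ∧
      RegularLang L ∧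
      (∀ (i : Fin k) (w : List X), a i w ≠ 0 → w ∈ L) ∧
      (∀ w ∈ L, algebraMap R K (S w) = ∏ i, (algebraMap R K (lam i)) ^ (a i w)) ∧
      (∀ w : List X, w ∉ L → S w = 0) :=
  unambiguous_formula_general S hrep
end

section
/- Let K be a field, X a finite nonempty alphabet, and S : X* → K a rational series. Then the following are equivalent: (1) S admits a deterministic linear representation; (2) for every minimal linear representation (u, μ, v) of S, the set Ω = { u·μ(w) : w ∈ X* } ⊆ K^{1×n} is contained in a finite union of vector subspaces of dimension at most 1. -/
/-!
A minimal representation is observable: a state vector `z` is determined by its future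
`w' ↦ z μ(w') v`, because the kernel of this observation map is orthogonal to the reachable space
of the transposed representation, which minimality forces to be the whole space.

In a deterministic automaton the row `u₀ μ₀(w)` is a multiple of a basis vector `e_p`, so the
future of `w` is a multiple of the future of the state `p`. Transported to a minimal
representation through observability, this puts `u μ(w)` on one of finitely many lines, one per
state.

Conversely, if `Ω` lies on finitely many lines, choose on each line met by `Ω` a point `u μ(wᵢ)`.
Then `μ(x)` sends `u μ(wᵢ)` to `u μ(wᵢ x)`, a multiple of some chosen `u μ(wⱼ)`, and the maps
`i ↦ j` with these scalars form a deterministic automaton recognizing `S`.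
-/

open Matrix Function

section LinearAlgebra

variable {F V W : Type*} [DivisionRing F] [AddCommGroup V] [Module F V] [AddCommGroup W]
  [Module F W]

lemma finrank_comap_le_of_injective {f : V →ₗ[F] W} (hf : Injective f) (N : Submodule F W)
    [FiniteDimensional F N] : Module.finrank F (N.comap f) ≤ Module.finrank F N :=
  LinearMap.finrank_le_finrank_of_injective (f := f.restrict (p := N.comap f) fun _ h => h)
    fun _ _ hab => Subtype.ext (hf (congrArg Subtype.val hab))

lemma Submodule.exists_smul_eq_of_finrank_le_one {N : Submodule F V} [FiniteDimensional F N]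
    (hN : Module.finrank F N ≤ 1) {x y : V} (hx : x ∈ N) (hx0 : x ≠ 0) (hy : y ∈ N) :
    ∃ c : F, y = c • x := by
  have hxN : F ∙ x = N := Submodule.eq_of_le_of_finrank_le
    ((Submodule.span_singleton_le_iff_mem _ _).2 hx) (hN.trans (finrank_span_singleton hx0).ge)
  obtain ⟨c, hc⟩ := Submodule.mem_span_singleton.1 (hxN ▸ hy)
  exact ⟨c, hc.symm⟩

end LinearAlgebra

section Semiring

variable {X K : Type*} [Semiring K] {n : ℕ} {S : List X → K} {u v : Fin n → K}
  {μ : X → Matrix (Fin n) (Fin n) K}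

@[simp]
lemma wordProd_nil (μ : X → Matrix (Fin n) (Fin n) K) : wordProd μ [] = 1 := rfl

@[simp]
lemma wordProd_cons (μ : X → Matrix (Fin n) (Fin n) K) (x : X) (w : List X) :
    wordProd μ (x :: w) = μ x * wordProd μ w := List.prod_cons

lemma wordProd_append (μ : X → Matrix (Fin n) (Fin n) K) (w w' : List X) :
    wordProd μ (w ++ w') = wordProd μ w * wordProd μ w' := by
  simp [wordProd]

lemma IsLinRep.apply_eq (h : IsLinRep S u μ v) (w : List X) :
    S w = (u ᵥ* wordProd μ w) ⬝ᵥ v := by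
  rw [h w, dotProduct_mulVec]

lemma IsLinRep.apply_append (h : IsLinRep S u μ v) (w w' : List X) :
    S (w ++ w') = (u ᵥ* wordProd μ w) ⬝ᵥ (wordProd μ w' *ᵥ v) := by
  rw [h.apply_eq, wordProd_append, ← vecMul_vecMul, dotProduct_mulVec]

lemma IsRational.exists_isMinimalRep (h : IsRational S) :
    ∃ (n : ℕ) (u : Fin n → K) (μ : X → Matrix (Fin n) (Fin n) K) (v : Fin n → K),
      IsMinimalRep S u μ v := by
  classical
  obtain ⟨u, μ, v, hrep⟩ := Nat.find_spec h
  exact ⟨_, u, μ, v, hrep, fun m u' μ' v' h' => Nat.find_min' h ⟨u', μ', v', h'⟩⟩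

lemma eq_smul_single_of_support_subset {m : Type*} [DecidableEq m] {x : m → K} {p : m}
    (hp : support x ⊆ {p}) : x = x p • Pi.single p 1 := funext fun i => by
  by_cases hi : i = p
  · simp [hi]
  · simpa [hi] using notMem_support.1 fun hmem => hi (hp hmem)

lemma support_vecMul_subsingleton {m : Type*} [Fintype m] {x : m → K} {M : Matrix m m K}
    (hx : (support x).Subsingleton) (hM : ∀ i, (support (M i)).Subsingleton) :
    (support (x ᵥ* M)).Subsingleton := by
  classical
  rcases hx.eq_empty_or_singleton with hx | ⟨p, hp⟩
  · rw [support_eq_empty_iff.1 hx, zero_vecMul, support_zero]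
    exact Set.subsingleton_empty
  · rw [eq_smul_single_of_support_subset hp.subset, smul_vecMul, single_vecMul, one_smul]
    exact (hM p).anti (support_const_smul_subset _ _)

lemma IsDeterministic.support_vecMul_wordProd_subsingleton (h : IsDeterministic u μ)
    (w : List X) : (support (u ᵥ* wordProd μ w)).Subsingleton := by
  suffices ∀ z : Fin n → K, (support z).Subsingleton →
      (support (z ᵥ* wordProd μ w)).Subsingleton from this u fun i hi j hj => h.1 i j hi hj
  induction w with
  | nil => simp
  | cons x w ih =>
    intro z hz
    rw [wordProd_cons, ← vecMul_vecMul]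
    exact ih _ (support_vecMul_subsingleton hz fun p q hq q' hq' => h.2 x p q q' hq hq')

end Semiring

section CommSemiring

variable {X K : Type*} [CommSemiring K] {n : ℕ} {S : List X → K} {u v : Fin n → K}
  {μ : X → Matrix (Fin n) (Fin n) K}

lemma wordProd_transpose (μ : X → Matrix (Fin n) (Fin n) K) (w : List X) :
    wordProd (fun x => (μ x)ᵀ) w = (wordProd μ w.reverse)ᵀ := by
  induction w with
  | nil => simp
  | cons x w ih => simp [ih, wordProd_append, transpose_mul]

lemma IsLinRep.transpose (h : IsLinRep S u μ v) :
    IsLinRep (fun w => S w.reverse) v (fun x => (μ x)ᵀ) u := fun w => by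
  dsimp only
  rw [h.apply_eq, wordProd_transpose, mulVec_transpose, dotProduct_comm]

lemma IsMinimalRep.transpose (h : IsMinimalRep S u μ v) :
    IsMinimalRep (fun w => S w.reverse) v (fun x => (μ x)ᵀ) u :=
  ⟨h.1.transpose, fun m u' μ' v' h' => h.2 m v' _ u' (by simpa using h'.transpose)⟩

end CommSemiring

section Field

variable {X K : Type*} [Field K] {n : ℕ} {S : List X → K} {u v : Fin n → K}
  {μ : X → Matrix (Fin n) (Fin n) K}

lemma vecMul_wordProd_mem {R : Submodule K (Fin n → K)} (hR : ∀ x, R ≤ R.comap (μ x).vecMulLinear)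
    (w : List X) {z : Fin n → K} (hz : z ∈ R) : z ᵥ* wordProd μ w ∈ R := by
  induction w generalizing z with
  | nil => simpa using hz
  | cons x w ih => simpa [← vecMul_vecMul] using ih (hR x hz)

lemma IsLinRep.exists_of_invariant (h : IsLinRep S u μ v) (R : Submodule K (Fin n → K))
    (hu : u ∈ R) (hR : ∀ x, R ≤ R.comap (μ x).vecMulLinear) :
    ∃ (u' : Fin (Module.finrank K R) → K) (μ' : X → Matrix _ _ K) (v' : _ → K),
      IsLinRep S u' μ' v' := by
  let b := Module.finBasis K R
  let μ' x := (LinearMap.toMatrix b b ((μ x).vecMulLinear.restrict (hR x)))ᵀ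
  let v' i := (b i : Fin n → K) ⬝ᵥ v
  have hμ' : ∀ w (z : R), b.repr z ᵥ* wordProd μ' w =
      b.repr ⟨z ᵥ* wordProd μ w, vecMul_wordProd_mem hR w z.2⟩ := by
    intro w
    induction w with
    | nil => intro z; simp
    | cons x w ih =>
      intro z
      rw [wordProd_cons, ← vecMul_vecMul, vecMul_transpose, LinearMap.toMatrix_mulVec_repr, ih]
      simp [vecMul_vecMul]
  have hv' : ∀ z : R, (z : Fin n → K) ⬝ᵥ v = b.repr z ⬝ᵥ v' := by
    intro z
    conv_lhs => rw [← b.sum_repr z]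
    simp only [Submodule.coe_sum, Submodule.coe_smul, sum_dotProduct, smul_dotProduct, smul_eq_mul]
    rfl
  refine ⟨b.repr ⟨u, hu⟩, μ', v', fun w => ?_⟩
  rw [dotProduct_mulVec, hμ', ← hv', h.apply_eq]

def reachableSpan (u : Fin n → K) (μ : X → Matrix (Fin n) (Fin n) K) : Submodule K (Fin n → K) :=
  Submodule.span K (Set.range fun w => u ᵥ* wordProd μ w)

lemma vecMul_wordProd_mem_reachableSpan (w : List X) : u ᵥ* wordProd μ w ∈ reachableSpan u μ :=
  Submodule.subset_span ⟨w, rfl⟩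

lemma IsMinimalRep.reachableSpan_eq_top (h : IsMinimalRep S u μ v) : reachableSpan u μ = ⊤ := by
  have hu : u ∈ reachableSpan u μ := by simpa using vecMul_wordProd_mem_reachableSpan (μ := μ) []
  have hR (x : X) : reachableSpan u μ ≤ (reachableSpan u μ).comap (μ x).vecMulLinear := by
    refine Submodule.span_le.2 ?_
    rintro _ ⟨w, rfl⟩
    simpa [wordProd_append, vecMul_vecMul] using vecMul_wordProd_mem_reachableSpan (w ++ [x])
  obtain ⟨u', μ', v', h'⟩ := h.1.exists_of_invariant _ hu hR
  apply Submodule.eq_top_of_finrank_eq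
  exact le_antisymm (reachableSpan u μ).finrank_le (by simpa using h.2 _ u' μ' v' h')

@[simps]
def observationMap (μ : X → Matrix (Fin n) (Fin n) K) (v : Fin n → K) :
    (Fin n → K) →ₗ[K] (List X → K) where
  toFun z w := z ⬝ᵥ (wordProd μ w *ᵥ v)
  map_add' _ _ := funext fun _ => add_dotProduct _ _ _
  map_smul' _ _ := funext fun _ => smul_dotProduct _ _ _

lemma IsLinRep.observationMap_vecMul_wordProd (h : IsLinRep S u μ v) (w : List X) :
    observationMap μ v (u ᵥ* wordProd μ w) = fun w' => S (w ++ w') :=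
  funext fun w' => (h.apply_append w w').symm

lemma IsMinimalRep.observationMap_injective (h : IsMinimalRep S u μ v) :
    Injective (observationMap μ v) := by
  refine (injective_iff_map_eq_zero _).2 fun z hz => dotProduct_eq_zero z fun y => ?_
  have hker : reachableSpan v (fun x => (μ x)ᵀ) ≤ LinearMap.ker (dotProductBilin K K z) := by
    refine Submodule.span_le.2 ?_
    rintro _ ⟨w, rfl⟩
    simpa [wordProd_transpose, vecMul_transpose] using congrFun hz w.reverse
  rw [h.transpose.reachableSpan_eq_top, top_le_iff] at hker
  simpa using LinearMap.congr_fun (LinearMap.ker_eq_top.1 hker) y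

lemma hullDimLE1_of_cover {ι : Type*} [Finite ι] (W : ι → Submodule K (Fin n → K))
    (hW : ∀ i, Module.finrank K (W i) ≤ 1) (hcov : ∀ w, ∃ i, u ᵥ* wordProd μ w ∈ W i) :
    HullDimLE1 u μ := by
  obtain ⟨k, ⟨e⟩⟩ := Finite.exists_equiv_fin ι
  refine ⟨k, W ∘ e.symm, fun i => hW _, fun w => ?_⟩
  obtain ⟨i, hi⟩ := hcov w
  exact ⟨e i, by simpa using hi⟩

theorem IsDeterministic.hullDimLE1 {n₀ : ℕ} {u₀ v₀ : Fin n₀ → K}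
    {μ₀ : X → Matrix (Fin n₀) (Fin n₀) K} (hdet : IsDeterministic u₀ μ₀)
    (hrep₀ : IsLinRep S u₀ μ₀ v₀) (h : IsMinimalRep S u μ v) : HullDimLE1 u μ := by
  classical
  set φ := observationMap μ v
  set φ₀ := observationMap μ₀ v₀
  have hφ : Injective φ := h.observationMap_injective
  have hφφ₀ (w : List X) : φ (u ᵥ* wordProd μ w) = φ₀ (u₀ ᵥ* wordProd μ₀ w) := by
    rw [h.1.observationMap_vecMul_wordProd, hrep₀.observationMap_vecMul_wordProd]
  -- `none` collects the words killed by the deterministic automaton, `some p` those ending in `p`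
  let W (o : Option (Fin n₀)) : Submodule K (Fin n → K) :=
    o.elim ⊥ fun p => (K ∙ φ₀ (Pi.single p 1)).comap φ
  refine hullDimLE1_of_cover W ?_ fun w => ?_
  · rintro (_ | p)
    · exact (finrank_bot K _).trans_le zero_le_one
    · exact (finrank_comap_le_of_injective hφ _).trans ((finrank_span_le_card _).trans (by simp))
  · rcases (hdet.support_vecMul_wordProd_subsingleton w).eq_empty_or_singleton with hx | ⟨p, hp⟩
    · refine ⟨none, (Submodule.mem_bot K).2 (hφ ?_)⟩
      rw [hφφ₀, support_eq_empty_iff.1 hx, map_zero, map_zero]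
    · refine ⟨some p, ?_⟩
      show φ _ ∈ K ∙ _
      rw [hφφ₀, eq_smul_single_of_support_subset hp.subset, map_smul]
      exact Submodule.smul_mem _ _ (Submodule.mem_span_singleton_self _)

lemma HullDimLE1.exists_words (h : HullDimLE1 u μ) :
    ∃ (k : ℕ) (ws : Fin k → List X),
      ∀ w, ∃ (i : Fin k) (c : K), u ᵥ* wordProd μ w = c • u ᵥ* wordProd μ (ws i) := by
  classical
  obtain ⟨k, W, hW, hcov⟩ := h
  let ws i := if h : ∃ w, u ᵥ* wordProd μ w ∈ W i ∧ u ᵥ* wordProd μ w ≠ 0 then h.choose else []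
  refine ⟨k, ws, fun w => ?_⟩
  obtain ⟨i, hi⟩ := hcov w
  by_cases h0 : u ᵥ* wordProd μ w = 0
  · exact ⟨i, 0, by rw [h0, zero_smul]⟩
  have hex : ∃ w, u ᵥ* wordProd μ w ∈ W i ∧ u ᵥ* wordProd μ w ≠ 0 := ⟨w, hi, h0⟩
  obtain ⟨hmem, hne⟩ := hex.choose_spec
  obtain ⟨c, hc⟩ := Submodule.exists_smul_eq_of_finrank_le_one (hW i) hmem hne hi
  exact ⟨i, c, by simpa [ws, hex] using hc⟩

lemma IsLinRep.exists_deterministic_of_lines {k : ℕ} (h : IsLinRep S u μ v)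
    (r : Fin k → Fin n → K) (hu : ∃ (i : Fin k) (c : K), u = c • r i)
    (hr : ∀ i x, ∃ (j : Fin k) (c : K), r i ᵥ* μ x = c • r j) :
    ∃ (u' : Fin k → K) (μ' : X → Matrix (Fin k) (Fin k) K) (v' : Fin k → K),
      IsLinRep S u' μ' v' ∧ IsDeterministic u' μ' := by
  classical
  choose j c hjc using hr
  obtain ⟨i₀, c₀, rfl⟩ := hu
  let μ' x : Matrix (Fin k) (Fin k) K := .of fun i => Pi.single (j i x) (c i x)
  have hμ' : ∀ w i a, ∃ i' a', Pi.single i a ᵥ* wordProd μ' w = Pi.single i' a' ∧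
      (a • r i) ᵥ* wordProd μ w = a' • r i' := by
    intro w
    induction w with
    | nil => exact fun i a => ⟨i, a, by simp⟩
    | cons x w ih =>
      intro i a
      obtain ⟨i', a', h₁, h₂⟩ := ih (j i x) (a * c i x)
      refine ⟨i', a', ?_, ?_⟩
      · rw [wordProd_cons, ← vecMul_vecMul, single_vecMul, ← h₁, ← smul_eq_mul, Pi.single_smul']
        rfl
      · rw [wordProd_cons, ← vecMul_vecMul, smul_vecMul, hjc, smul_smul, h₂]
  refine ⟨Pi.single i₀ c₀, μ', fun i => r i ⬝ᵥ v, fun w => ?_, ?_, ?_⟩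
  · obtain ⟨i', a', h₁, h₂⟩ := hμ' w i₀ c₀
    rw [dotProduct_mulVec, h₁, h.apply_eq, h₂, single_dotProduct, smul_dotProduct, smul_eq_mul]
  · exact fun _ _ hi hj => Pi.subsingleton_support_single hi hj
  · exact fun x i _ _ hq hq' => Pi.subsingleton_support_single hq hq'

lemma IsLinRep.exists_deterministic_of_hullDimLE1 (h : IsLinRep S u μ v) (hΩ : HullDimLE1 u μ) :
    ∃ (m : ℕ) (u' : Fin m → K) (μ' : X → Matrix (Fin m) (Fin m) K) (v' : Fin m → K),
      IsLinRep S u' μ' v' ∧ IsDeterministic u' μ' := by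
  obtain ⟨k, ws, hws⟩ := hΩ.exists_words
  refine ⟨k, h.exists_deterministic_of_lines (fun i => u ᵥ* wordProd μ (ws i)) ?_ fun i x => ?_⟩
  · simpa using hws []
  · simpa [wordProd_append, vecMul_vecMul] using hws (ws i ++ [x])

end Field

theorem determinizable_iff_hull_general {K X : Type*} [Field K]
    (S : List X → K) (hrat : IsRational S) :
    (∃ (n : ℕ) (u : Fin n → K) (μ : X → Matrix (Fin n) (Fin n) K) (v : Fin n → K),
        IsLinRep S u μ v ∧ IsDeterministic u μ) ↔
    (∀ (n : ℕ) (u : Fin n → K) (μ : X → Matrix (Fin n) (Fin n) K) (v : Fin n → K),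
        IsMinimalRep S u μ v → HullDimLE1 u μ) := by
  constructor
  · rintro ⟨n₀, u₀, μ₀, v₀, hrep₀, hdet⟩ n u μ v hmin
    exact hdet.hullDimLE1 hrep₀ hmin
  · intro hΩ
    obtain ⟨n, u, μ, v, hmin⟩ := hrat.exists_isMinimalRep
    exact hmin.1.exists_deterministic_of_hullDimLE1 (hΩ n u μ v hmin)

/-- A rational series is recognized by a deterministic weighted automaton if and only if
the linear hull of every minimal linear representation has dimension at most `1`. -/
theorem determinizable_iff_hull {K X : Type*} [Field K] [Fintype X] [Nonempty X]
    (S : List X → K) (hrat : IsRational S) :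
    (∃ (n : ℕ) (u : Fin n → K) (μ : X → Matrix (Fin n) (Fin n) K) (v : Fin n → K),
        IsLinRep S u μ v ∧ IsDeterministic u μ) ↔
    (∀ (n : ℕ) (u : Fin n → K) (μ : X → Matrix (Fin n) (Fin n) K) (v : Fin n → K),
        IsMinimalRep S u μ v → HullDimLE1 u μ) :=
  determinizable_iff_hull_general S hrat
end

section
/- Let K be a field, X a finite nonempty alphabet, and S : X* → K a series with a linear representation (u, μ, v) of rank n such that the set Ω = { u·μ(w) : w ∈ X* } ⊆ K^{1×n} is contained in a finite union of vector subspaces of dimension at most 1. Then S admits a deterministic linear representation. -/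
/-!
The row vectors `u μ(w)` lie on finitely many lines through the origin; choosing on each such
line one reachable vector `c i` spanning it, the vector `u` and every `c i μ(x)` are again
reachable, hence multiples of some `c j`. Sending the state `i` to the row vector `c i` thus
intertwines a deterministic representation on the states `i` with `(u, μ, v)`.
-/

open Matrix Submodule

section WordProd

variable {X K : Type*} [CommSemiring K] {m n : ℕ}

theorem vecMul_wordProd_append_singleton (u : Fin n → K) (μ : X → Matrix (Fin n) (Fin n) K)
    (w : List X) (x : X) : u ᵥ* wordProd μ (w ++ [x]) = u ᵥ* wordProd μ w ᵥ* μ x := by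
  simp [wordProd, vecMul_vecMul]

theorem wordProd_mul_of_intertwines {μ : X → Matrix (Fin n) (Fin n) K}
    {μ' : X → Matrix (Fin m) (Fin m) K} {C : Matrix (Fin m) (Fin n) K}
    (hC : ∀ x, μ' x * C = C * μ x) (w : List X) :
    wordProd μ' w * C = C * wordProd μ w := by
  induction w with
  | nil => simp [wordProd]
  | cons x w ih =>
    simp only [wordProd, List.map_cons, List.prod_cons] at ih ⊢
    rw [Matrix.mul_assoc, ih, ← Matrix.mul_assoc, hC, Matrix.mul_assoc]

theorem IsLinRep.of_intertwines {S : List X → K} {u : Fin n → K}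
    {μ : X → Matrix (Fin n) (Fin n) K} {v : Fin n → K} (hrep : IsLinRep S u μ v)
    {u' : Fin m → K} {μ' : X → Matrix (Fin m) (Fin m) K} {C : Matrix (Fin m) (Fin n) K}
    (hu : u' ᵥ* C = u) (hC : ∀ x, μ' x * C = C * μ x) :
    IsLinRep S u' μ' (C *ᵥ v) := by
  intro w
  rw [hrep w, ← hu, ← dotProduct_mulVec, mulVec_mulVec, mulVec_mulVec,
    wordProd_mul_of_intertwines hC]

end WordProd

theorem isDeterministic_single {X K : Type*} [Semiring K] {m : ℕ} (q : Fin m) (a : K)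
    (τ : X → Fin m → Fin m) (b : X → Fin m → K) :
    IsDeterministic (Pi.single q a) (fun x => Matrix.of fun p => Pi.single (τ x p) (b x p)) := by
  have eq_of_single_ne_zero {i j : Fin m} {c : K} (h : Pi.single (M := fun _ => K) i c j ≠ 0) :
      j = i := by
    by_contra hji
    exact h (by simp [hji])
  refine ⟨fun i j hi hj => ?_, fun x p q q' hq hq' => ?_⟩
  · rw [eq_of_single_ne_zero hi, eq_of_single_ne_zero hj]
  · rw [eq_of_single_ne_zero hq, eq_of_single_ne_zero hq']

theorem exists_deterministic_of_forall_mem_span_singleton {X K : Type*} [CommSemiring K]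
    {n m : ℕ} {S : List X → K} {u : Fin n → K} {μ : X → Matrix (Fin n) (Fin n) K}
    {v : Fin n → K} (hrep : IsLinRep S u μ v) (c : Fin m → Fin n → K)
    (hu : ∃ q, u ∈ K ∙ c q) (hμ : ∀ p x, ∃ q, c p ᵥ* μ x ∈ K ∙ c q) :
    ∃ (u' : Fin m → K) (μ' : X → Matrix (Fin m) (Fin m) K) (v' : Fin m → K),
      IsLinRep S u' μ' v' ∧ IsDeterministic u' μ' := by
  obtain ⟨q, hq⟩ := hu
  obtain ⟨a, ha⟩ := mem_span_singleton.1 hq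
  choose τ hτ using hμ
  choose b hb using fun p x => mem_span_singleton.1 (hτ p x)
  refine ⟨Pi.single q a, fun x => Matrix.of fun p => Pi.single (τ p x) (b p x),
    Matrix.of c *ᵥ v, hrep.of_intertwines ?_ ?_, isDeterministic_single _ _ _ _⟩
  · simpa using ha
  · intro x
    funext p
    change Pi.single (τ p x) (b p x) ᵥ* Matrix.of c = c p ᵥ* μ x
    rw [single_vecMul, ← hb]
    rfl

theorem Submodule.mem_span_singleton_of_finrank_le_one {K V : Type*} [DivisionRing K]
    [AddCommGroup V] [Module K V] {W : Submodule K V} [FiniteDimensional K W]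
    (hW : Module.finrank K W ≤ 1) {t r : V} (ht : t ∈ W) (ht0 : t ≠ 0) (hr : r ∈ W) :
    r ∈ K ∙ t := by
  have hle : K ∙ t ≤ W := (span_singleton_le_iff_mem t W).2 ht
  have heq : K ∙ t = W :=
    eq_of_le_of_finrank_le hle (by rwa [finrank_span_singleton ht0])
  exact heq ▸ hr

theorem exists_forall_mem_span_singleton_of_subset_iUnion {K V ι : Type*} [DivisionRing K]
    [AddCommGroup V] [Module K V] [FiniteDimensional K V] (W : ι → Submodule K V)
    (hW : ∀ i, Module.finrank K (W i) ≤ 1) {R : Set V} (hR : R ⊆ ⋃ i, (W i : Set V))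
    {r₀ : V} (hr₀ : r₀ ∈ R) :
    ∃ c : ι → V, (∀ i, c i ∈ R) ∧ ∀ r ∈ R, ∃ i, r ∈ K ∙ c i := by
  classical
  let c : ι → V := fun i => if h : ∃ r ∈ R, r ∈ W i ∧ r ≠ 0 then h.choose else r₀
  refine ⟨c, fun i => ?_, fun r hr => ?_⟩
  · by_cases h : ∃ r ∈ R, r ∈ W i ∧ r ≠ 0
    · simpa only [c, dif_pos h] using h.choose_spec.1
    · simpa only [c, dif_neg h] using hr₀
  · obtain ⟨i, hi⟩ := Set.mem_iUnion.1 (hR hr)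
    refine ⟨i, ?_⟩
    by_cases hr0 : r = 0
    · exact hr0 ▸ zero_mem _
    have h : ∃ r ∈ R, r ∈ W i ∧ r ≠ 0 := ⟨r, hr, hi, hr0⟩
    obtain ⟨-, hci, hci0⟩ := h.choose_spec
    simp only [c, dif_pos h]
    exact mem_span_singleton_of_finrank_le_one (hW i) hci hci0 hi

theorem hull_deterministic_general {K X : Type*} [Field K]
    (S : List X → K) {n : ℕ} (u : Fin n → K) (μ : X → Matrix (Fin n) (Fin n) K)
    (v : Fin n → K) (hrep : IsLinRep S u μ v) (hhull : HullDimLE1 u μ) :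
    ∃ (m : ℕ) (u' : Fin m → K) (μ' : X → Matrix (Fin m) (Fin m) K) (v' : Fin m → K),
      IsLinRep S u' μ' v' ∧ IsDeterministic u' μ' := by
  obtain ⟨k, W, hW, hmem⟩ := hhull
  obtain ⟨c, hc, hspan⟩ := exists_forall_mem_span_singleton_of_subset_iUnion W hW
    (R := Set.range fun w => u ᵥ* wordProd μ w)
    (by rintro _ ⟨w, rfl⟩; exact Set.mem_iUnion.2 (hmem w)) ⟨[], rfl⟩
  refine ⟨k, exists_deterministic_of_forall_mem_span_singleton hrep c ?_ fun p x => ?_⟩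
  · exact hspan u ⟨[], by simp [wordProd]⟩
  · obtain ⟨w, hw⟩ := hc p
    rw [← hw]
    exact hspan _ ⟨w ++ [x], vecMul_wordProd_append_singleton u μ w x⟩

/-- If a series has a linear representation whose linear hull has dimension at most `1`,
then it admits a deterministic linear representation. -/
theorem hull_deterministic {K X : Type*} [Field K] [Fintype X] [Nonempty X]
    (S : List X → K) {n : ℕ} (u : Fin n → K) (μ : X → Matrix (Fin n) (Fin n) K)
    (v : Fin n → K) (hrep : IsLinRep S u μ v) (hhull : HullDimLE1 u μ) :
    ∃ (m : ℕ) (u' : Fin m → K) (μ' : X → Matrix (Fin m) (Fin m) K) (v' : Fin m → K),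
      IsLinRep S u' μ' v' ∧ IsDeterministic u' μ' :=
  hull_deterministic_general S u μ v hrep hhull
end

section
/- Let K be a field and V a finite-dimensional K-vector space. Let (Y_i)_{i ∈ I} be an arbitrary family of subsets of V such that each Y_i is a finite union of K-vector subspaces of V. Then the intersection ⋂_{i ∈ I} Y_i is again a finite union of K-vector subspaces of V; in fact it equals the intersection of finitely many of the Y_i. Consequently, the collection of finite unions of subspaces forms the closed sets of a (noetherian) topology on V. -/
/-- `Y` is a finite union of vector subspaces of `V`. -/
def IsFinUnionSubspaces (K : Type*) {V : Type*} [Field K] [AddCommGroup V] [Module K V]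
    (Y : Set V) : Prop :=
  ∃ (k : ℕ) (W : Fin k → Submodule K V), Y = ⋃ i, (W i : Set V)

/-!
Over an infinite field a subspace covered by finitely many subspaces lies in one of them, so a
finite union of subspaces `Y` is the union of its finitely many maximal subspaces. If `Y' ⊊ Y`,
the maximal subspaces of `Y'` arise from those of `Y` by replacing some of them with finitely many
strictly smaller subspaces, a descent in the Dershowitz–Manna order. Since subspaces of a
finite-dimensional space satisfy the descending chain condition, so does that order, and hence so
do finite unions of subspaces (over a finite field this is clear, `V` being finite). A family of
sets that is closed under finite intersections and satisfies the descending chain condition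
contains every intersection of its members, as a minimal finite subintersection; together with
closure under finite unions, this makes it the family of closed sets of a noetherian topology.
-/

open Set

namespace Set

variable {α : Type*} {C : Set (Set α)}

theorem biInter_finset_mem {ι : Type*} (huniv : univ ∈ C) (hinter : ∀ A ∈ C, ∀ B ∈ C, A ∩ B ∈ C)
    (s : Finset ι) {Y : ι → Set α} (hY : ∀ i ∈ s, Y i ∈ C) : ⋂ i ∈ s, Y i ∈ C := by
  have := Finset.inf_induction huniv hinter hY
  rwa [Finset.inf_eq_iInf] at this

theorem IsWF.exists_finset_iInter_eq {ι : Type*} (hC : C.IsWF) (huniv : univ ∈ C)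
    (hinter : ∀ A ∈ C, ∀ B ∈ C, A ∩ B ∈ C) (Y : ι → Set α) (hY : ∀ i, Y i ∈ C) :
    ∃ s : Finset ι, ⋂ i, Y i = ⋂ i ∈ s, Y i := by
  classical
  have hmem (s : Finset ι) : ⋂ i ∈ s, Y i ∈ C := biInter_finset_mem huniv hinter s fun i _ ↦ hY i
  obtain ⟨_, ⟨s, rfl⟩, hmin⟩ := (hC.mono (range_subset_iff.2 hmem)).exists_minimal
    (range_nonempty fun s : Finset ι ↦ ⋂ i ∈ s, Y i)
  refine ⟨s, (iInter_subset_iInter₂ _ _).antisymm (subset_iInter fun j ↦ ?_)⟩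
  have hle : ⋂ i ∈ insert j s, Y i ⊆ ⋂ i ∈ s, Y i :=
    biInter_subset_biInter_left (Finset.coe_subset.2 (Finset.subset_insert j s))
  exact (hmin ⟨insert j s, rfl⟩ hle).trans (biInter_subset_of_mem (Finset.mem_insert_self j s))

theorem IsWF.sInter_mem (hC : C.IsWF) (huniv : univ ∈ C) (hinter : ∀ A ∈ C, ∀ B ∈ C, A ∩ B ∈ C)
    (A : Set (Set α)) (hA : A ⊆ C) : ⋂₀ A ∈ C := by
  obtain ⟨s, hs⟩ :=
    hC.exists_finset_iInter_eq huniv hinter (fun Z : A ↦ (Z : Set α)) fun Z ↦ hA Z.2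
  rw [sInter_eq_iInter, hs]
  exact biInter_finset_mem huniv hinter s fun Z _ ↦ hA Z.2

end Set

namespace TopologicalSpace

open Topology

variable {X : Type*}

theorem isClosed_ofClosed {T : Set (Set X)} (hempty : ∅ ∈ T) (hsInter : ∀ A ⊆ T, ⋂₀ A ∈ T)
    (hunion : ∀ A ∈ T, ∀ B ∈ T, A ∪ B ∈ T) (Z : Set X) :
    IsClosed[ofClosed T hempty hsInter hunion] Z ↔ Z ∈ T := by
  rw [← @isOpen_compl_iff _ _ (ofClosed T hempty hsInter hunion), isOpen_mk, compl_compl]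

theorem noetherianSpace_ofClosed {T : Set (Set X)} (hempty : ∅ ∈ T)
    (hsInter : ∀ A ⊆ T, ⋂₀ A ∈ T) (hunion : ∀ A ∈ T, ∀ B ∈ T, A ∪ B ∈ T) (hT : T.IsWF) :
    @NoetherianSpace X (ofClosed T hempty hsInter hunion) := by
  let _ := ofClosed T hempty hsInter hunion
  have hclosed : NoetherianSpace X ↔ WellFoundedLT (Closeds X) := (noetherianSpace_TFAE X).out 0 1
  rw [hclosed]
  exact ⟨InvImage.wf (fun Z : Closeds X ↦
    (⟨Z, (isClosed_ofClosed hempty hsInter hunion Z).1 Z.isClosed⟩ : T)) hT⟩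

end TopologicalSpace

theorem Submodule.exists_le_of_subset_biUnion {K V : Type*} [DivisionRing K] [Infinite K]
    [AddCommGroup V] [Module K V] {s : Finset (Submodule K V)} {W : Submodule K V}
    (h : (W : Set V) ⊆ ⋃ U ∈ s, (U : Set V)) : ∃ U ∈ s, W ≤ U := by
  classical
  have hcover : ⋃ U ∈ s.image (comap W.subtype), (U : Set W) = univ := by
    ext x
    simpa using h x.2
  obtain ⟨U, hU, hWU⟩ := Finset.mem_image.1 (Subspace.top_mem_of_biUnion_eq_univ hcover)
  exact ⟨U, hU, comap_subtype_eq_top.1 hWU⟩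

theorem Finset.isDershowitzMannaLT_val {α : Type*} [PartialOrder α] [DecidableEq α]
    {s t : Finset α} (hs : IsAntichain (· ≤ ·) (s : Set α)) (hst : ∀ a ∈ s, ∃ b ∈ t, a ≤ b)
    (hts : ¬t ⊆ s) : Multiset.IsDershowitzMannaLT s.val t.val := by
  refine ⟨(s ∩ t).val, (s \ t).val, (t \ s).val, ?_, ?_, ?_, ?_⟩
  · rwa [Multiset.empty_eq_zero, Ne, Finset.val_eq_zero, Finset.sdiff_eq_empty_iff_subset]
  · rw [Finset.inter_val, Finset.sdiff_val, add_comm, Multiset.sub_add_inter]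
  · rw [Finset.inter_comm, Finset.inter_val, Finset.sdiff_val, add_comm, Multiset.sub_add_inter]
  · intro a ha
    rw [Finset.mem_val, Finset.mem_sdiff] at ha
    obtain ⟨b, hbt, hab⟩ := hst a ha.1
    have hne : a ≠ b := fun h ↦ ha.2 (h ▸ hbt)
    have hbs : b ∉ s := fun hbs ↦ hs ha.1 hbs hne hab
    exact ⟨b, Finset.mem_def.1 (Finset.mem_sdiff.2 ⟨hbt, hbs⟩), hab.lt_of_ne hne⟩

section

variable {K V : Type*} [Field K] [AddCommGroup V] [Module K V] {Y Z : Set V}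

theorem isFinUnionSubspaces_iff_exists_finset :
    IsFinUnionSubspaces K Y ↔ ∃ s : Finset (Submodule K V), Y = ⋃ W ∈ s, (W : Set V) := by
  classical
  constructor
  · rintro ⟨k, W, rfl⟩
    exact ⟨Finset.univ.image W, by simp⟩
  · rintro ⟨s, rfl⟩
    refine ⟨s.card, fun i ↦ s.equivFin.symm i, ?_⟩
    ext x
    simp only [mem_iUnion, SetLike.mem_coe, exists_prop]
    exact ⟨fun ⟨W, hW, hx⟩ ↦ ⟨s.equivFin ⟨W, hW⟩, by simpa⟩,
      fun ⟨i, hx⟩ ↦ ⟨_, (s.equivFin.symm i).2, hx⟩⟩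

namespace IsFinUnionSubspaces

theorem empty : IsFinUnionSubspaces K (∅ : Set V) := ⟨0, Fin.elim0, by simp⟩

theorem univ : IsFinUnionSubspaces K (univ : Set V) := ⟨1, fun _ ↦ ⊤, by simp [iUnion_const]⟩

theorem union (hY : IsFinUnionSubspaces K Y) (hZ : IsFinUnionSubspaces K Z) :
    IsFinUnionSubspaces K (Y ∪ Z) := by
  classical
  obtain ⟨s, rfl⟩ := isFinUnionSubspaces_iff_exists_finset.1 hY
  obtain ⟨t, rfl⟩ := isFinUnionSubspaces_iff_exists_finset.1 hZ
  exact isFinUnionSubspaces_iff_exists_finset.2 ⟨s ∪ t, by rw [Finset.set_biUnion_union]⟩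

theorem inter (hY : IsFinUnionSubspaces K Y) (hZ : IsFinUnionSubspaces K Z) :
    IsFinUnionSubspaces K (Y ∩ Z) := by
  classical
  obtain ⟨s, rfl⟩ := isFinUnionSubspaces_iff_exists_finset.1 hY
  obtain ⟨t, rfl⟩ := isFinUnionSubspaces_iff_exists_finset.1 hZ
  refine isFinUnionSubspaces_iff_exists_finset.2 ⟨Finset.image₂ (· ⊓ ·) s t, ?_⟩
  ext x
  simp only [mem_inter_iff, mem_iUnion, Finset.mem_image₂, SetLike.mem_coe, exists_prop]
  constructor
  · rintro ⟨⟨W, hW, hxW⟩, U, hU, hxU⟩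
    exact ⟨_, ⟨W, hW, U, hU, rfl⟩, hxW, hxU⟩
  · rintro ⟨_, ⟨W, hW, U, hU, rfl⟩, hxW, hxU⟩
    exact ⟨⟨W, hW, hxW⟩, U, hU, hxU⟩

end IsFinUnionSubspaces

variable (K) in
def maximalSubspaces (Y : Set V) : Set (Submodule K V) :=
  {W | Maximal (fun U : Submodule K V ↦ (U : Set V) ⊆ Y) W}

variable [FiniteDimensional K V]

theorem exists_le_mem_maximalSubspaces {W : Submodule K V} (hW : (W : Set V) ⊆ Y) :
    ∃ U ∈ maximalSubspaces K Y, W ≤ U := by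
  obtain ⟨U, hWU, hU⟩ :=
    exists_maximal_ge_of_wellFoundedGT (fun U : Submodule K V ↦ (U : Set V) ⊆ Y) W hW
  exact ⟨U, hU, hWU⟩

namespace IsFinUnionSubspaces

theorem biUnion_maximalSubspaces (hY : IsFinUnionSubspaces K Y) :
    ⋃ W ∈ maximalSubspaces K Y, (W : Set V) = Y := by
  refine (iUnion₂_subset fun W hW ↦ hW.1).antisymm fun x hx ↦ ?_
  obtain ⟨k, p, rfl⟩ := hY
  obtain ⟨i, hi⟩ := mem_iUnion.1 hx
  obtain ⟨W, hW, hpW⟩ := exists_le_mem_maximalSubspaces (subset_iUnion (fun i ↦ (p i : Set V)) i)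
  exact mem_biUnion hW (hpW hi)

theorem finite_maximalSubspaces (hY : IsFinUnionSubspaces K Y) :
    (maximalSubspaces K Y).Finite := by
  cases finite_or_infinite K
  · have : Finite V := Module.finite_of_finite K
    have : Finite (Submodule K V) := Finite.of_injective _ SetLike.coe_injective
    exact toFinite _
  · obtain ⟨s, rfl⟩ := isFinUnionSubspaces_iff_exists_finset.1 hY
    refine s.finite_toSet.subset fun W hW ↦ ?_
    obtain ⟨U, hU, hWU⟩ := Submodule.exists_le_of_subset_biUnion hW.1
    have hUs : (U : Set V) ⊆ ⋃ U ∈ s, (U : Set V) :=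
      subset_biUnion_of_mem (u := fun U : Submodule K V ↦ (U : Set V)) hU
    rwa [hWU.antisymm (hW.2 hUs hWU)]

end IsFinUnionSubspaces

theorem isWF_setOf_isFinUnionSubspaces : {Y : Set V | IsFinUnionSubspaces K Y}.IsWF := by
  classical
  refine Subrelation.wf ?_ (InvImage.wf (fun Y : {Y : Set V | IsFinUnionSubspaces K Y} ↦
    (IsFinUnionSubspaces.finite_maximalSubspaces Y.2).toFinset.val)
    Multiset.wellFounded_isDershowitzMannaLT)
  rintro ⟨Y', hY'⟩ ⟨Y, hY⟩ (hlt : Y' ⊂ Y)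
  apply Finset.isDershowitzMannaLT_val
  · rw [Set.Finite.coe_toFinset]
    exact setOfPred_maximal_antichain _
  · intro W hW
    have hWY : (W : Set V) ⊆ Y := ((Set.Finite.mem_toFinset _).1 hW).1.trans hlt.subset
    simpa using exists_le_mem_maximalSubspaces hWY
  · intro hsub
    apply hlt.not_subset
    rw [← hY.biUnion_maximalSubspaces, ← hY'.biUnion_maximalSubspaces]
    exact biUnion_subset_biUnion_left (by simpa using hsub)

end

/-- In a finite-dimensional vector space, an arbitrary intersection of finite unions of
subspaces is a finite subintersection, and is again a finite union of subspaces;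
consequently the finite unions of subspaces are the closed sets of a noetherian
topology. -/
theorem finUnionSubspaces_topology {K V : Type*} [Field K] [AddCommGroup V] [Module K V]
    [FiniteDimensional K V] {I : Type*} (Y : I → Set V)
    (hY : ∀ i, IsFinUnionSubspaces K (Y i)) :
    ((∃ s : Finset I, (⋂ i, Y i) = ⋂ i ∈ s, Y i) ∧
      IsFinUnionSubspaces K (⋂ i, Y i)) ∧
    ∃ t : TopologicalSpace V,
      (∀ Z : Set V, @IsClosed V t Z ↔ IsFinUnionSubspaces K Z) ∧
      @TopologicalSpace.NoetherianSpace V t := by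
  have hwf := isWF_setOf_isFinUnionSubspaces (K := K) (V := V)
  have hinter : ∀ A ∈ {Z : Set V | IsFinUnionSubspaces K Z}, ∀ B ∈ {Z | IsFinUnionSubspaces K Z},
      A ∩ B ∈ {Z | IsFinUnionSubspaces K Z} := fun _ hA _ hB ↦ hA.inter hB
  have hsInter := hwf.sInter_mem IsFinUnionSubspaces.univ hinter
  have hunion : ∀ A ∈ {Z : Set V | IsFinUnionSubspaces K Z}, ∀ B ∈ {Z | IsFinUnionSubspaces K Z},
      A ∪ B ∈ {Z | IsFinUnionSubspaces K Z} := fun _ hA _ hB ↦ hA.union hB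
  refine ⟨⟨hwf.exists_finset_iInter_eq IsFinUnionSubspaces.univ hinter Y hY,
    sInter_range Y ▸ hsInter _ (range_subset_iff.2 hY)⟩,
    TopologicalSpace.ofClosed _ IsFinUnionSubspaces.empty hsInter hunion,
    TopologicalSpace.isClosed_ofClosed _ _ _,
    TopologicalSpace.noetherianSpace_ofClosed _ _ _ hwf⟩
end

section
/- Let K be a field, V a K-vector space with basis e₁, …, e_n, and Γ ⊆ K a subset. For every vector subspace W ⊆ V there exists a basis f₁, …, f_m of W such that every element of W of the form α₁e₁ + ⋯ + α_ne_n with all αᵢ ∈ Γ can be written as β₁f₁ + ⋯ + β_mf_m with all βⱼ ∈ Γ. -/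
/-!
The restrictions to `W` of the coordinate functionals `e*ᵢ` span the dual of `W`, so some of
them, `e*_{s 1}, …, e*_{s m}`, form a basis of it. The basis `f` of `W` predual to this one has
coordinate functionals `e*_{s j}`, hence the `f`-coordinates of any `w ∈ W` are among its
`e`-coordinates.
-/

open Module Submodule

section

variable {K V W : Type*} [Field K] [AddCommGroup V] [Module K V] [AddCommGroup W] [Module K W]

theorem Module.Basis.span_range_coord_comp_eq_top {ι : Type*} [Finite ι] (e : Basis ι K V)
    {p : W →ₗ[K] V} (hp : Function.Injective p) :
    span K (Set.range fun i ↦ e.coord i ∘ₗ p) = ⊤ := by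
  classical
  have hrange : Set.range (fun i ↦ e.coord i ∘ₗ p) = p.dualMap '' Set.range e.dualBasis := by
    rw [← Set.range_comp, e.coe_dualBasis]; rfl
  rw [hrange, span_image, e.dualBasis.span_eq, Submodule.map_top,
    LinearMap.range_eq_top.mpr (LinearMap.dualMap_surjective_of_injective hp)]

theorem Module.Basis.coord_map_dualBasis_evalEquiv_symm [FiniteDimensional K W] {ι : Type*}
    [Finite ι] [DecidableEq ι] (B : Basis ι K (Dual K W)) (j : ι) :
    (B.dualBasis.map (evalEquiv K W).symm).coord j = B j := by
  ext w
  simp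

theorem exists_basis_coord_mem_of_span_eq_top [FiniteDimensional K W] {s : Set (Dual K W)}
    (hs : span K s = ⊤) : ∃ (m : ℕ) (b : Basis (Fin m) K W), ∀ j, b.coord j ∈ s := by
  classical
  obtain ⟨t, hts, hspan, hli⟩ := exists_linearIndependent K s
  have : Finite t := hli.finite
  have : Fintype t := Fintype.ofFinite t
  let B : Basis (Fin (Fintype.card t)) K (Dual K W) :=
    (Basis.mk hli (by simp [hspan, hs])).reindex (Fintype.equivFin t)
  refine ⟨_, B.dualBasis.map (evalEquiv K W).symm, fun j ↦ ?_⟩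
  rw [B.coord_map_dualBasis_evalEquiv_symm]
  exact hts (by simp [B])

theorem Module.Basis.exists_basis_submodule_coord_eq {ι : Type*} [Finite ι] (e : Basis ι K V)
    (U : Submodule K V) :
    ∃ (m : ℕ) (b : Basis (Fin m) K U) (s : Fin m → ι),
      ∀ j, b.coord j = e.coord (s j) ∘ₗ U.subtype := by
  have : FiniteDimensional K V := .of_basis e
  obtain ⟨m, b, hb⟩ := exists_basis_coord_mem_of_span_eq_top
    (e.span_range_coord_comp_eq_top U.injective_subtype)
  choose s hs using hb
  exact ⟨m, b, s, fun j ↦ (hs j).symm⟩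

end

/-- For a subspace `W` of a vector space with basis `e₁, …, e_n` there is a basis of `W`
such that every element of `W` whose coordinates w.r.t. `e` lie in `Γ` has coordinates
w.r.t. the new basis lying in `Γ`. -/
theorem subspace_basis_coords {K V : Type*} [Field K] [AddCommGroup V] [Module K V]
    {n : ℕ} (e : Module.Basis (Fin n) K V) (Γ : Set K) (W : Submodule K V) :
    ∃ (m : ℕ) (f : Fin m → V), LinearIndependent K f ∧
      Submodule.span K (Set.range f) = W ∧
      ∀ α : Fin n → K, (∀ i, α i ∈ Γ) → (∑ i, α i • e i) ∈ W →
        ∃ β : Fin m → K, (∀ j, β j ∈ Γ) ∧ (∑ j, β j • f j) = ∑ i, α i • e i := by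
  obtain ⟨m, b, s, hb⟩ := e.exists_basis_submodule_coord_eq W
  refine ⟨m, W.subtype ∘ b, b.linearIndependent.map' _ W.ker_subtype, ?_, ?_⟩
  · rw [Set.range_comp, span_image, b.span_eq, Submodule.map_top, range_subtype]
  · intro α hα hW
    refine ⟨α ∘ s, fun j ↦ hα (s j), ?_⟩
    have hcoord : ∀ j, b.repr ⟨_, hW⟩ j = α (s j) := fun j ↦ by
      rw [← b.coord_apply, hb]
      simp [Finsupp.single_apply]
    calc ∑ j, (α ∘ s) j • (W.subtype ∘ b) j
        = W.subtype (∑ j, b.repr ⟨_, hW⟩ j • b j) := by simp [hcoord]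
      _ = ∑ i, α i • e i := by rw [b.sum_repr]; rfl
end

section
/- Let R be a commutative ring, X a finite nonempty alphabet, and (u, μ, v) a linear representation of rank n with entries in R. Suppose there exists a collection 𝒮 of subsets of {1, …, n} whose union is {1, …, n} and such that: (1) there exists M ∈ 𝒮 containing every index ν with u_ν ≠ 0; (2) for every M ∈ 𝒮 and x ∈ X there exists N ∈ 𝒮 such that for all ν ∈ M and all j, μ(x)_{ν,j} ≠ 0 implies j ∈ N; (3) for every M ∈ 𝒮, x ∈ X and column index j, there is at most one ν ∈ M with μ(x)_{ν,j} ≠ 0; (4) for every M ∈ 𝒮 there is at most one ν ∈ M with v_ν ≠ 0. Then the linear representation (u, μ, v) is unambiguous. -/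
/-!
Two accepting paths for the same word lie, at every position, in a common block of `𝒮`:
the initial states share a block by (1), and (2) carries a common block along each letter.
The paths then agree at the last position by (4), and by (3) agreement at position `i + 1`
forces agreement at position `i`, since both states at position `i` lie in one block and
have nonzero transitions into the same state.
-/

namespace IsAcceptingPath

variable {X K : Type*} [Semiring K] {n : ℕ} {u : Fin n → K}
  {μ : X → Matrix (Fin n) (Fin n) K} {v : Fin n → K} {𝒮 : Set (Set (Fin n))}
  {w : List X} {p q : Fin (w.length + 1) → Fin n}

theorem exists_mem_both (hp : IsAcceptingPath u μ v w p) (hq : IsAcceptingPath u μ v w q)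
    (h1 : ∃ M ∈ 𝒮, ∀ ν : Fin n, u ν ≠ 0 → ν ∈ M)
    (h2 : ∀ M ∈ 𝒮, ∀ x : X, ∃ N ∈ 𝒮, ∀ ν ∈ M, ∀ j : Fin n, μ x ν j ≠ 0 → j ∈ N)
    (i : Fin (w.length + 1)) : ∃ M ∈ 𝒮, p i ∈ M ∧ q i ∈ M := by
  induction i using Fin.induction with
  | zero =>
    obtain ⟨M, hM, hinit⟩ := h1
    exact ⟨M, hM, hinit _ hp.1, hinit _ hq.1⟩
  | succ i ih =>
    obtain ⟨M, hM, hpM, hqM⟩ := ih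
    obtain ⟨N, hN, hstep⟩ := h2 M hM (w.get i)
    exact ⟨N, hN, hstep _ hpM _ (hp.2.1 i), hstep _ hqM _ (hq.2.1 i)⟩

theorem eq_of_forall_exists_mem_both (hp : IsAcceptingPath u μ v w p)
    (hq : IsAcceptingPath u μ v w q)
    (h3 : ∀ M ∈ 𝒮, ∀ (x : X) (j : Fin n), ∀ ν ∈ M, ∀ ν' ∈ M,
      μ x ν j ≠ 0 → μ x ν' j ≠ 0 → ν = ν')
    (h4 : ∀ M ∈ 𝒮, ∀ ν ∈ M, ∀ ν' ∈ M, v ν ≠ 0 → v ν' ≠ 0 → ν = ν')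
    (hboth : ∀ i, ∃ M ∈ 𝒮, p i ∈ M ∧ q i ∈ M) : p = q := by
  funext i
  induction i using Fin.reverseInduction with
  | last =>
    obtain ⟨M, hM, hpM, hqM⟩ := hboth (Fin.last w.length)
    exact h4 M hM _ hpM _ hqM hp.2.2 hq.2.2
  | cast i ih =>
    obtain ⟨M, hM, hpM, hqM⟩ := hboth i.castSucc
    have hq_step : μ (w.get i) (q i.castSucc) (p i.succ) ≠ 0 := ih ▸ hq.2.1 i
    exact h3 M hM (w.get i) (p i.succ) _ hpM _ hqM (hp.2.1 i) hq_step

end IsAcceptingPath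

theorem unambiguous_criterion_general {R X : Type*} [CommRing R]
    {n : ℕ} (u : Fin n → R) (μ : X → Matrix (Fin n) (Fin n) R) (v : Fin n → R)
    (𝒮 : Set (Set (Fin n)))
    (h1 : ∃ M ∈ 𝒮, ∀ ν : Fin n, u ν ≠ 0 → ν ∈ M)
    (h2 : ∀ M ∈ 𝒮, ∀ x : X, ∃ N ∈ 𝒮, ∀ ν ∈ M, ∀ j : Fin n, μ x ν j ≠ 0 → j ∈ N)
    (h3 : ∀ M ∈ 𝒮, ∀ (x : X) (j : Fin n), ∀ ν ∈ M, ∀ ν' ∈ M,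
      μ x ν j ≠ 0 → μ x ν' j ≠ 0 → ν = ν')
    (h4 : ∀ M ∈ 𝒮, ∀ ν ∈ M, ∀ ν' ∈ M, v ν ≠ 0 → v ν' ≠ 0 → ν = ν') :
    IsUnambiguous u μ v := fun _ _ _ hp hq =>
  hp.eq_of_forall_exists_mem_both hq h3 h4 (hp.exists_mem_both hq h1 h2)

/-- A sufficient criterion for a linear representation to be unambiguous. -/
theorem unambiguous_criterion {R X : Type*} [CommRing R] [Fintype X] [Nonempty X]
    {n : ℕ} (u : Fin n → R) (μ : X → Matrix (Fin n) (Fin n) R) (v : Fin n → R)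
    (𝒮 : Set (Set (Fin n)))
    (hcover : ∀ i : Fin n, ∃ M ∈ 𝒮, i ∈ M)
    (h1 : ∃ M ∈ 𝒮, ∀ ν : Fin n, u ν ≠ 0 → ν ∈ M)
    (h2 : ∀ M ∈ 𝒮, ∀ x : X, ∃ N ∈ 𝒮, ∀ ν ∈ M, ∀ j : Fin n, μ x ν j ≠ 0 → j ∈ N)
    (h3 : ∀ M ∈ 𝒮, ∀ (x : X) (j : Fin n), ∀ ν ∈ M, ∀ ν' ∈ M,
      μ x ν j ≠ 0 → μ x ν' j ≠ 0 → ν = ν')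
    (h4 : ∀ M ∈ 𝒮, ∀ ν ∈ M, ∀ ν' ∈ M, v ν ≠ 0 → v ν' ≠ 0 → ν = ν') :
    IsUnambiguous u μ v :=
  unambiguous_criterion_general u μ v 𝒮 h1 h2 h3 h4
end
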